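/- arXiv:1908.00820 — 2 statements merged into one kernel-verified Lean document; each statement's English description precedes it below -/
import Mathlib

section
/- Let n ≥ 1, let D₁, D₂ ∈ ℝ^{n×4} and W_d ∈ ℝ^{4×4}, and define f_d(σ) = ‖D₁W_d − M(σ,D₂)W_d‖_F² for permutations σ of {1,…,n}. Suppose i ≠ j are two indices in {1,…,n} and σ⁽¹⁾, σ⁽²⁾ are two permutations of {1,…,n} satisfying σ⁽¹⁾(i) = σ⁽²⁾(j), σ⁽¹⁾(j) = σ⁽²⁾(i), σ⁽¹⁾(k) = σ⁽²⁾(k) for all k ∉ {i,j}, and f_d(σ⁽²⁾) − f_d(σ⁽¹⁾) = c > 0. Then no permutation τ of {1,…,n} with τ(i) = σ⁽²⁾(i) and τ(j) = σ⁽²⁾(j) can minimize f_d over the set of all permutations of {1,…,n}: for any such τ there exists a permutation τ⁻ with f_d(τ⁻) < f_d(τ). -/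
open Matrix

/-- Squared Frobenius norm of a real matrix: `‖A‖_F² = ∑ᵢⱼ A i j ^ 2`. -/
def frobSq {m n : Type*} [Fintype m] [Fintype n] (A : Matrix m n ℝ) : ℝ :=
  ∑ i, ∑ j, (A i j) ^ 2

/-- The pole-matching objective `f_d(σ) = ‖D₁ W_d − M(σ, D₂) W_d‖_F²`, where
`M(σ, D₂)` is the matrix whose `k`-th row is the `σ(k)`-th row of `D₂`. -/
def poleObj {n : ℕ} (D₁ D₂ : Matrix (Fin n) (Fin 4) ℝ) (W : Matrix (Fin 4) (Fin 4) ℝ)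
    (σ : Equiv.Perm (Fin n)) : ℝ :=
  frobSq (D₁ * W - D₂.submatrix σ id * W)

lemma poleObj_eq_sum {n : ℕ} (D₁ D₂ : Matrix (Fin n) (Fin 4) ℝ)
    (W : Matrix (Fin 4) (Fin 4) ℝ) (σ : Equiv.Perm (Fin n)) :
    poleObj D₁ D₂ W σ =
      ∑ k, ∑ l, ((D₁ * W) k l - (D₂ * W) (σ k) l) ^ 2 := by
  unfold poleObj frobSq
  simp [Matrix.mul_apply, Matrix.sub_apply, Matrix.submatrix_apply]

theorem branch_and_bound_exclusion {n : ℕ} (hn : 1 ≤ n)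
    (D₁ D₂ : Matrix (Fin n) (Fin 4) ℝ) (W : Matrix (Fin 4) (Fin 4) ℝ)
    (i j : Fin n) (hij : i ≠ j)
    (σ₁ σ₂ : Equiv.Perm (Fin n))
    (h1 : σ₁ i = σ₂ j) (h2 : σ₁ j = σ₂ i)
    (h3 : ∀ k, k ≠ i → k ≠ j → σ₁ k = σ₂ k)
    (c : ℝ) (hc : poleObj D₁ D₂ W σ₂ - poleObj D₁ D₂ W σ₁ = c) (hcpos : 0 < c) :
    ∀ τ : Equiv.Perm (Fin n), τ i = σ₂ i → τ j = σ₂ j →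
      ∃ τ' : Equiv.Perm (Fin n), poleObj D₁ D₂ W τ' < poleObj D₁ D₂ W τ := by
  intro τ hti htj
  set h : Fin n → Fin n → ℝ := fun k r => ∑ l, ((D₁ * W) k l - (D₂ * W) r l) ^ 2 with hh
  refine ⟨τ * Equiv.swap i j, ?_⟩
  set τ' := τ * Equiv.swap i j with hτ'
  have hτ'i : τ' i = σ₂ j := by simp [hτ', Equiv.swap_apply_left, htj]
  have hτ'j : τ' j = σ₂ i := by simp [hτ', Equiv.swap_apply_right, hti]
  have hτ'k : ∀ k, k ≠ i → k ≠ j → τ' k = τ k := by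
    intro k hki hkj
    simp [hτ', Equiv.swap_apply_of_ne_of_ne hki hkj]
  have key : poleObj D₁ D₂ W τ - poleObj D₁ D₂ W τ' = c := by
    rw [← hc]
    rw [poleObj_eq_sum, poleObj_eq_sum, poleObj_eq_sum, poleObj_eq_sum,
      ← Finset.sum_sub_distrib, ← Finset.sum_sub_distrib]
    apply Finset.sum_congr rfl
    intro k _
    by_cases hki : k = i
    · subst hki; rw [hti, hτ'i, h1]
    · by_cases hkj : k = j
      · subst hkj; rw [htj, hτ'j, h2]
      · rw [hτ'k k hki hkj, h3 k hki hkj]; ring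
  linarith
end

section
/- Let n ≥ 1, let D₁, D₂ ∈ ℝ^{n×4} and W_d ∈ ℝ^{4×4}, and define f_d(σ) = ‖D₁W_d − M(σ,D₂)W_d‖_F² for permutations σ of {1,…,n}. Suppose i ≠ j are two indices in {1,…,n} and σ⁽¹⁾, σ⁽²⁾ are permutations of {1,…,n} with σ⁽¹⁾(i) = σ⁽²⁾(j), σ⁽¹⁾(j) = σ⁽²⁾(i), and σ⁽¹⁾(k) = σ⁽²⁾(k) for all k ∉ {i,j}. Then for any permutation τ of {1,…,n} with τ(i) = σ⁽²⁾(i) and τ(j) = σ⁽²⁾(j), the permutation τ⁻ obtained from τ by swapping the values at positions i and j (i.e., τ⁻(i) = τ(j), τ⁻(j) = τ(i), and τ⁻(k) = τ(k) for k ∉ {i,j}) satisfies f_d(τ) − f_d(τ⁻) = f_d(σ⁽²⁾) − f_d(σ⁽¹⁾). -/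
open Matrix

theorem swap_objective_difference {n : ℕ} (hn : 1 ≤ n)
    (D₁ D₂ : Matrix (Fin n) (Fin 4) ℝ) (W : Matrix (Fin 4) (Fin 4) ℝ)
    (i j : Fin n) (hij : i ≠ j)
    (σ₁ σ₂ : Equiv.Perm (Fin n))
    (h1 : σ₁ i = σ₂ j) (h2 : σ₁ j = σ₂ i)
    (h3 : ∀ k, k ≠ i → k ≠ j → σ₁ k = σ₂ k)
    (τ τ' : Equiv.Perm (Fin n)) (hτi : τ i = σ₂ i) (hτj : τ j = σ₂ j)
    (hτ'i : τ' i = τ j) (hτ'j : τ' j = τ i)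
    (hτ'k : ∀ k, k ≠ i → k ≠ j → τ' k = τ k) :
    poleObj D₁ D₂ W τ - poleObj D₁ D₂ W τ' =
      poleObj D₁ D₂ W σ₂ - poleObj D₁ D₂ W σ₁ := by
  classical
  set r : Fin n → Fin n → ℝ := fun k p => ∑ l, ((D₁ * W) k l - (D₂ * W) p l) ^ 2 with hr
  have hdecomp : ∀ σ : Equiv.Perm (Fin n), poleObj D₁ D₂ W σ = ∑ k, r k (σ k) := by
    intro σ
    unfold poleObj frobSq
    refine Finset.sum_congr rfl fun k _ => ?_
    refine Finset.sum_congr rfl fun l _ => ?_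
    simp [Matrix.sub_apply, Matrix.mul_apply, Matrix.submatrix_apply, r]
  rw [hdecomp, hdecomp, hdecomp, hdecomp, ← Finset.sum_sub_distrib,
    ← Finset.sum_sub_distrib]
  refine Finset.sum_congr rfl fun k _ => ?_
  by_cases hki : k = i
  · subst hki
    rw [hτi, hτ'i, hτj, h1]
  · by_cases hkj : k = j
    · subst hkj
      rw [hτj, hτ'j, hτi, h2]
    · rw [hτ'k k hki hkj, h3 k hki hkj, sub_self, sub_self]
end
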